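/- Let (A, ·, 𝔅) be a quadratic perm algebra and r ∈ A ⊗ A with (R, ad)-invariant skew-symmetric part. Define P: A → A by P(a) = Tᵣ(𝔅♯(a)). Then r is a solution of the perm Yang-Baxter equation in (A, ·) if and only if P(a)·P(b) = P(P(a)·b + a·P(b) − a·T_{r−σ(r)}(𝔅♯(b))) for all a, b ∈ A. -/

import Mathlib

open TensorProduct

section
variable {K : Type*} [Field K] {A : Type*} [AddCommGroup A] [Module K A]

/-- perm identity for a plain binary operation -/
def IsPermFn {X : Type*} (mu : X → X → X) : Prop :=
  ∀ a b c : X, mu a (mu b c) = mu (mu a b) c ∧ mu (mu a b) c = mu (mu b a) c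

/-- perm algebra: bundled bilinear multiplication satisfying the perm identities -/
def IsPermMul (m : A →ₗ[K] A →ₗ[K] A) : Prop :=
  ∀ a b c : A, m a (m b c) = m (m a b) c ∧ m (m a b) c = m (m b a) c

/-- The map `T_r : A* → A` associated with a 2-tensor `r ∈ A ⊗ A`,
`T_r(a*) = Σ ⟨a*, a_i⟩ b_i` for `r = Σ a_i ⊗ b_i`. -/
noncomputable def Tten (r : A ⊗[K] A) : Module.Dual K A →ₗ[K] A :=
  TensorProduct.lift (LinearMap.mk₂ K
    (fun a b => (Module.Dual.eval K A a).smulRight b)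
    (by intro a a' b; ext f; simp [add_smul])
    (by intro c a b; ext f; simp [mul_smul])
    (by intro a b b'; ext f; simp [smul_add])
    (by intro c a b; ext f; simp [smul_comm c])) r

noncomputable def mulT (m : A →ₗ[K] A →ₗ[K] A) : A ⊗[K] A →ₗ[K] A := TensorProduct.lift m

noncomputable def p13_23 (m : A →ₗ[K] A →ₗ[K] A) :
    (A ⊗[K] A) ⊗[K] (A ⊗[K] A) →ₗ[K] (A ⊗[K] A) ⊗[K] A :=
  (TensorProduct.map LinearMap.id (mulT m)) ∘ₗ
    (TensorProduct.tensorTensorTensorComm K A A A A).toLinearMap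

noncomputable def p12_13 (m : A →ₗ[K] A →ₗ[K] A) :
    (A ⊗[K] A) ⊗[K] (A ⊗[K] A) →ₗ[K] (A ⊗[K] A) ⊗[K] A :=
  (TensorProduct.assoc K A A A).symm.toLinearMap ∘ₗ
    (TensorProduct.map (mulT m) LinearMap.id) ∘ₗ
    (TensorProduct.tensorTensorTensorComm K A A A A).toLinearMap

noncomputable def p13_12 (m : A →ₗ[K] A →ₗ[K] A) :
    (A ⊗[K] A) ⊗[K] (A ⊗[K] A) →ₗ[K] (A ⊗[K] A) ⊗[K] A :=
  (TensorProduct.assoc K A A A).symm.toLinearMap ∘ₗ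
    (TensorProduct.map (mulT m) (TensorProduct.comm K A A).toLinearMap) ∘ₗ
    (TensorProduct.tensorTensorTensorComm K A A A A).toLinearMap

noncomputable def p12_23 (m : A →ₗ[K] A →ₗ[K] A) :
    (A ⊗[K] A) ⊗[K] (A ⊗[K] A) →ₗ[K] (A ⊗[K] A) ⊗[K] A :=
  (TensorProduct.assoc K A A A).symm.toLinearMap ∘ₗ
    (TensorProduct.leftComm K A A A).toLinearMap ∘ₗ
    (TensorProduct.map (mulT m) LinearMap.id) ∘ₗ
    (TensorProduct.tensorTensorTensorComm K A A A A).toLinearMap ∘ₗ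
    (TensorProduct.map (TensorProduct.comm K A A).toLinearMap LinearMap.id)

/-- `[[r,r]] = r₁₂·r₂₃ − r₁₃·r₂₃ + r₁₂·r₁₃ − r₁₃·r₁₂` -/
noncomputable def ybrac (m : A →ₗ[K] A →ₗ[K] A) (r : A ⊗[K] A) : (A ⊗[K] A) ⊗[K] A :=
  p12_23 m (r ⊗ₜ r) - p13_23 m (r ⊗ₜ r) + p12_13 m (r ⊗ₜ r) - p13_12 m (r ⊗ₜ r)

/-- the perm Yang-Baxter equation -/
noncomputable def IsPYBESol (m : A →ₗ[K] A →ₗ[K] A) (r : A ⊗[K] A) : Prop := ybrac m r = 0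

/-- `(id ⊗ R(a) − ad(a) ⊗ id)(s) = 0` for all `a`. -/
def RadInv (m : A →ₗ[K] A →ₗ[K] A) (s : A ⊗[K] A) : Prop :=
  ∀ a : A, TensorProduct.map LinearMap.id (m.flip a) s
    = TensorProduct.map (m a - m.flip a) LinearMap.id s

variable {V : Type*} [AddCommGroup V] [Module K V]

/-- representation of a perm algebra -/
def IsPermRep (m : A →ₗ[K] A →ₗ[K] A) (l rr : A →ₗ[K] V →ₗ[K] V) : Prop :=
  ∀ a b : A, l (m a b) = l a ∘ₗ l b ∧ l a ∘ₗ l b = l b ∘ₗ l a ∧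
    rr (m a b) = rr b ∘ₗ rr a ∧ rr b ∘ₗ rr a = rr b ∘ₗ l a ∧ rr b ∘ₗ l a = l a ∘ₗ rr b

/-- A-perm algebra -/
def IsAPermAlg (m : A →ₗ[K] A →ₗ[K] A) (l rr : A →ₗ[K] V →ₗ[K] V)
    (mV : V →ₗ[K] V →ₗ[K] V) : Prop :=
  IsPermRep m l rr ∧ IsPermMul mV ∧
  (∀ (a : A) (u w : V), rr a (mV u w) = rr a (mV w u) ∧ rr a (mV u w) = mV u (rr a w)) ∧
  (∀ (a : A) (u w : V), mV (l a u) w = mV (rr a u) w ∧ mV (l a u) w = l a (mV u w) ∧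
    l a (mV u w) = mV u (l a w))

/-! Pairing `[[r,r]]` with `𝔅♯a ⊗ 𝔅♯b ⊗ 𝔅♯c` gives `𝔅(c, P(P(a)·b + a·T_{σ(r)}(𝔅♯b)) − P(a)·P(b))`:
invariance of `𝔅` moves each product of `[[r,r]]` across the form, after which every term reads as
a value of `T_r`. As `𝔅♯` is onto and `𝔅` is nondegenerate, `[[r,r]] = 0` exactly when that
bracket vanishes for all `a, b`, and `T_r − T_{r−σ(r)} = T_{σ(r)}` puts it in the stated form. -/

namespace TensorProduct

variable {R M N P : Type*} [CommRing R] [AddCommGroup M] [Module R M] [Module.Free R M]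
  [Module.Finite R M] [AddCommGroup N] [Module R N] [Module.Free R N] [Module.Finite R N]

theorem eq_zero_of_forall_dualDistrib_apply_eq_zero {t : M ⊗[R] N}
    (h : ∀ f g, dualDistrib R M N (f ⊗ₜ g) t = 0) : t = 0 := by
  refine (Module.forall_dual_apply_eq_zero_iff R t).mp fun φ => ?_
  obtain ⟨x, rfl⟩ := (dualDistribEquiv R M N).surjective φ
  induction x using TensorProduct.induction_on with
  | zero => simp
  | tmul f g => exact h f g
  | add x y hx hy => simp_all

theorem eq_zero_of_forall_dualDistrib_dualDistrib_apply_eq_zero [AddCommGroup P] [Module R P]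
    [Module.Free R P] [Module.Finite R P] {t : (M ⊗[R] N) ⊗[R] P}
    (h : ∀ f g k, dualDistrib R _ P (dualDistrib R M N (f ⊗ₜ g) ⊗ₜ k) t = 0) : t = 0 := by
  refine eq_zero_of_forall_dualDistrib_apply_eq_zero fun ψ k => ?_
  obtain ⟨x, rfl⟩ := (dualDistribEquiv R M N).surjective ψ
  induction x using TensorProduct.induction_on with
  | zero => simp
  | tmul f g => exact h f g k
  | add x y hx hy => simp_all [add_tmul]

end TensorProduct

@[simp] lemma Tten_tmul (x y : A) (f : Module.Dual K A) :
    Tten (x ⊗ₜ[K] y) f = f x • y := by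
  simp [Tten]

@[simp] lemma Tten_zero : Tten (0 : A ⊗[K] A) = 0 := by
  simp [Tten]

lemma Tten_add (r s : A ⊗[K] A) : Tten (r + s) = Tten r + Tten s := by
  simp [Tten]

lemma Tten_sub (r s : A ⊗[K] A) : Tten (r - s) = Tten r - Tten s := by
  simp [Tten]

section YangBaxter

variable (m : A →ₗ[K] A →ₗ[K] A)

@[simp] lemma p13_23_tmul (x y u v : A) :
    p13_23 m ((x ⊗ₜ[K] y) ⊗ₜ[K] (u ⊗ₜ[K] v)) = (x ⊗ₜ[K] u) ⊗ₜ[K] m y v := by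
  simp [p13_23, mulT]

@[simp] lemma p12_13_tmul (x y u v : A) :
    p12_13 m ((x ⊗ₜ[K] y) ⊗ₜ[K] (u ⊗ₜ[K] v)) = (m x u ⊗ₜ[K] y) ⊗ₜ[K] v := by
  simp [p12_13, mulT]

@[simp] lemma p13_12_tmul (x y u v : A) :
    p13_12 m ((x ⊗ₜ[K] y) ⊗ₜ[K] (u ⊗ₜ[K] v)) = (m x u ⊗ₜ[K] v) ⊗ₜ[K] y := by
  simp [p13_12, mulT]

@[simp] lemma p12_23_tmul (x y u v : A) :
    p12_23 m ((x ⊗ₜ[K] y) ⊗ₜ[K] (u ⊗ₜ[K] v)) = (x ⊗ₜ[K] m y u) ⊗ₜ[K] v := by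
  simp [p12_23, mulT]

/-- Polarization of `ybrac`, with the factors of the last term swapped: this is what gives the
pairing with `𝔅♯a ⊗ 𝔅♯b ⊗ 𝔅♯c` a closed form already on pairs of pure tensors. -/
noncomputable def polarYBrac (r r' : A ⊗[K] A) : (A ⊗[K] A) ⊗[K] A :=
  p12_23 m (r ⊗ₜ r') - p13_23 m (r ⊗ₜ r') + p12_13 m (r ⊗ₜ r') - p13_12 m (r' ⊗ₜ r)

variable (B : A →ₗ[K] A →ₗ[K] K)

lemma form_apply_mul_eq_mul_apply (hskewB : ∀ a b : A, B a b = - B b a)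
    (hinvB : ∀ a b c : A, B (m a b) c = B a (m b c - m c b)) (y b u : A) :
    B b (m y u) = B (m y b) u := by
  rw [hskewB b (m y u), hinvB y u b, hinvB y b u, map_sub, map_sub]
  ring

lemma dualDistrib_polarYBrac (hskewB : ∀ a b : A, B a b = - B b a)
    (hinvB : ∀ a b c : A, B (m a b) c = B a (m b c - m c b)) (a b c : A) (r r' : A ⊗[K] A) :
    dualDistrib K _ A (dualDistrib K A A (B a ⊗ₜ B b) ⊗ₜ B c) (polarYBrac m r r')
      = B c (Tten r' (B (m (Tten r (B a)) b))
          + Tten r' (B (m a (Tten (TensorProduct.comm K A A r) (B b))))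
          - m (Tten r (B a)) (Tten r' (B b))) := by
  induction r using TensorProduct.induction_on with
  | zero => simp [polarYBrac]
  | add r₁ r₂ h₁ h₂ =>
    simp only [polarYBrac, add_tmul, tmul_add, map_add, map_sub, Tten_add,
      LinearMap.add_apply] at *
    linear_combination h₁ + h₂
  | tmul x y =>
    induction r' using TensorProduct.induction_on with
    | zero => simp [polarYBrac]
    | add s₁ s₂ h₁ h₂ =>
      simp only [polarYBrac, add_tmul, tmul_add, map_add, map_sub, Tten_add,
        LinearMap.add_apply] at *
      linear_combination h₁ + h₂
    | tmul u v =>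
      simp only [polarYBrac, p12_23_tmul, p13_23_tmul, p12_13_tmul, p13_12_tmul, map_sub,
        map_add, dualDistrib_apply, Tten_tmul, TensorProduct.comm_tmul, map_smul,
        LinearMap.smul_apply, smul_eq_mul]
      linear_combination B a x * B c v * form_apply_mul_eq_mul_apply m B hskewB hinvB y b u
        - B b y * B c v * (hinvB a x u).trans (map_sub (B a) _ _)

lemma dualDistrib_ybrac (hskewB : ∀ a b : A, B a b = - B b a)
    (hinvB : ∀ a b c : A, B (m a b) c = B a (m b c - m c b)) (r : A ⊗[K] A) (a b c : A) :
    dualDistrib K _ A (dualDistrib K A A (B a ⊗ₜ B b) ⊗ₜ B c) (ybrac m r)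
      = B c (Tten r (B (m (Tten r (B a)) b + m a (Tten r (B b))
          - m a (Tten (r - TensorProduct.comm K A A r) (B b))))
          - m (Tten r (B a)) (Tten r (B b))) := by
  rw [show ybrac m r = polarYBrac m r r from rfl, dualDistrib_polarYBrac m B hskewB hinvB, Tten_sub]
  simp only [map_add, map_sub, LinearMap.sub_apply]
  abel

end YangBaxter

lemma eq_zero_of_forall_apply_eq_zero {B : A →ₗ[K] A →ₗ[K] K} (hB : Function.Injective B)
    (hskewB : ∀ a b : A, B a b = - B b a) {x : A} (h : ∀ c, B c x = 0) : x = 0 :=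
  hB <| LinearMap.ext fun c => by simp [hskewB x c, h c]

theorem stmt12_general [FiniteDimensional K A] (m : A →ₗ[K] A →ₗ[K] A)
    (B : A →ₗ[K] A →ₗ[K] K) (hB : Function.Bijective B)
    (hskewB : ∀ a b : A, B a b = - B b a)
    (hinvB : ∀ a b c : A, B (m a b) c = B a (m b c - m c b))
    (r : A ⊗[K] A) :
    IsPYBESol m r ↔
      ∀ a b : A,
        m (Tten r (B a)) (Tten r (B b))
          = Tten r (B (m (Tten r (B a)) b + m a (Tten r (B b))
              - m a (Tten (r - (TensorProduct.comm K A A) r) (B b)))) := by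
  have pairing := dualDistrib_ybrac m B hskewB hinvB r
  constructor
  · intro hYB a b
    refine (sub_eq_zero.mp (eq_zero_of_forall_apply_eq_zero hB.injective hskewB fun c => ?_)).symm
    rw [← pairing, hYB, map_zero]
  · intro hP
    refine TensorProduct.eq_zero_of_forall_dualDistrib_dualDistrib_apply_eq_zero fun f g k => ?_
    obtain ⟨a, rfl⟩ := hB.surjective f
    obtain ⟨b, rfl⟩ := hB.surjective g
    obtain ⟨c, rfl⟩ := hB.surjective k
    rw [pairing, hP, sub_self, map_zero]

theorem stmt12 [FiniteDimensional K A] (m : A →ₗ[K] A →ₗ[K] A) (hm : IsPermMul m)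
    (B : A →ₗ[K] A →ₗ[K] K) (hB : Function.Bijective B)
    (hskewB : ∀ a b : A, B a b = - B b a)
    (hinvB : ∀ a b c : A, B (m a b) c = B a (m b c - m c b))
    (r : A ⊗[K] A) (hinv : RadInv m (r - (TensorProduct.comm K A A) r)) :
    IsPYBESol m r ↔
      ∀ a b : A,
        m (Tten r (B a)) (Tten r (B b))
          = Tten r (B (m (Tten r (B a)) b + m a (Tten r (B b))
              - m a (Tten (r - (TensorProduct.comm K A A) r) (B b)))) :=
  stmt12_general m B hB hskewB hinvB r

end
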